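/- Let α ∈ ℝ with 0 < α < 1/2, let u, v, f, g : ℕ → ℝ be the sequences of the context, and set h(k) = 1/(f(k)·g(k)), w(0) = 0, w(k+1) = w(k) + h(k). Then for every k ≥ 1: |u(3k−1) − u(3k−2)| = |u(3k−2) − u(3k−3)|, |v(3k) − v(3k−1)| = |v(3k−1) − v(3k−2)|, and |w(3k+1) − w(3k)| = |w(3k) − w(3k−1)|. -/

import Mathlib

/-- `Π₁(k) = ∏_{j=1}^{k} (j+2α)/(j−α)`. -/
noncomputable def Pi1 (α : ℝ) (k : ℕ) : ℝ :=
  ∏ j ∈ Finset.range k, (((j : ℝ) + 1) + 2 * α) / (((j : ℝ) + 1) - α)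

/-- `Π₂(k) = ∏_{j=1}^{k} (j+α)/(j−2α)`. -/
noncomputable def Pi2 (α : ℝ) (k : ℕ) : ℝ :=
  ∏ j ∈ Finset.range k, (((j : ℝ) + 1) + α) / (((j : ℝ) + 1) - 2 * α)

/-- The axis values of the field `u`: `u(3k) = (2k/(k+2α))·Π₁(k)`,
`u(3k+1) = ((2k+2α)/(k+2α))·Π₁(k)`, `u(3k+2) = 2·Π₁(k)`. -/
noncomputable def uSeq (α : ℝ) (n : ℕ) : ℝ :=
  if n % 3 = 0 then (2 * ((n / 3 : ℕ) : ℝ) / (((n / 3 : ℕ) : ℝ) + 2 * α)) * Pi1 α (n / 3)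
  else if n % 3 = 1 then
    ((2 * ((n / 3 : ℕ) : ℝ) + 2 * α) / (((n / 3 : ℕ) : ℝ) + 2 * α)) * Pi1 α (n / 3)
  else 2 * Pi1 α (n / 3)

/-- The axis values of the field `f`: `f(0) = f(1) = 1` and
`f(3k−1) = f(3k) = f(3k+1) = (2α/(k+2α))·Π₁(k)` for `k ≥ 1`. -/
noncomputable def fSeq (α : ℝ) (n : ℕ) : ℝ :=
  if n ≤ 1 then 1
  else (2 * α / ((((n + 1) / 3 : ℕ) : ℝ) + 2 * α)) * Pi1 α ((n + 1) / 3)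

/-- The axis values of the field `v`: `v(3k) = (k/(k+α))·Π₂(k)`,
`v(3k+1) = Π₂(k)`, and `v(3k−1) = ((k−α)/(k+α))·Π₂(k)` for `k ≥ 1`. -/
noncomputable def vSeq (α : ℝ) (n : ℕ) : ℝ :=
  if n % 3 = 0 then (((n / 3 : ℕ) : ℝ) / (((n / 3 : ℕ) : ℝ) + α)) * Pi2 α (n / 3)
  else if n % 3 = 1 then Pi2 α (n / 3)
  else (((((n + 1) / 3 : ℕ) : ℝ) - α) / ((((n + 1) / 3 : ℕ) : ℝ) + α))
    * Pi2 α ((n + 1) / 3)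

/-- The axis values of the field `g`: `g(0) = 1` and
`g(3k−2) = g(3k−1) = g(3k) = (α/(k+α))·Π₂(k)` for `k ≥ 1`. -/
noncomputable def gSeq (α : ℝ) (n : ℕ) : ℝ :=
  if n = 0 then 1
  else (α / ((((n + 2) / 3 : ℕ) : ℝ) + α)) * Pi2 α ((n + 2) / 3)

/-- The third field `h(k) = 1/(f(k)·g(k))`. -/
noncomputable def hSeq (α : ℝ) (n : ℕ) : ℝ := 1 / (fSeq α n * gSeq α n)

/-- The potential `w` of the third field: `w(0) = 0`, `w(k+1) = w(k) + h(k)`. -/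
noncomputable def wSeq (α : ℝ) : ℕ → ℝ
  | 0 => 0
  | n + 1 => wSeq α n + hSeq α n

/-
On each axis the three values around a multiple of three are given by explicit rational multiples
of the same product `Π₁(k)` or `Π₂(k)`, so both differences can be computed in closed form:
`u(3k+2) - u(3k+1) = u(3k+1) - u(3k) = 2α/(k+2α)·Π₁(k)` and, using
`Π₂(k+1) = Π₂(k)·(k+1+α)/(k+1-2α)`, `v(3k+3) - v(3k+2) = v(3k+2) - v(3k+1) = α/(k+1+α)·Π₂(k+1)`.
For `w` the two differences are `h(3k+2)` and `h(3k+3)`, which agree because `f` and `g` are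
constant on `{3k+2, 3k+3}`.
-/

section Evaluation

variable (α : ℝ) (k : ℕ)

theorem Pi2_succ :
    Pi2 α (k + 1) = Pi2 α k * (((k : ℝ) + 1 + α) / ((k : ℝ) + 1 - 2 * α)) :=
  Finset.prod_range_succ _ _

theorem uSeq_three_mul : uSeq α (3 * k) = 2 * k / (k + 2 * α) * Pi1 α k := by
  simp [uSeq]

theorem uSeq_three_mul_add_one :
    uSeq α (3 * k + 1) = (2 * k + 2 * α) / (k + 2 * α) * Pi1 α k := by
  simp [uSeq, Nat.add_div]

theorem uSeq_three_mul_add_two : uSeq α (3 * k + 2) = 2 * Pi1 α k := by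
  simp [uSeq, Nat.add_div]

theorem vSeq_three_mul_add_one : vSeq α (3 * k + 1) = Pi2 α k := by
  simp [vSeq, Nat.add_div]

theorem vSeq_three_mul_add_two :
    vSeq α (3 * k + 2) = ((k : ℝ) + 1 - α) / ((k : ℝ) + 1 + α) * Pi2 α (k + 1) := by
  simp [vSeq, Nat.add_div]

theorem vSeq_three_mul_add_three :
    vSeq α (3 * k + 3) = ((k : ℝ) + 1) / ((k : ℝ) + 1 + α) * Pi2 α (k + 1) := by
  simp [vSeq]

theorem fSeq_three_mul_add_three : fSeq α (3 * k + 3) = fSeq α (3 * k + 2) := by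
  simp [fSeq, Nat.add_div]

theorem gSeq_three_mul_add_three : gSeq α (3 * k + 3) = gSeq α (3 * k + 2) := by
  simp [gSeq, Nat.add_div]

theorem wSeq_succ_sub (n : ℕ) : wSeq α (n + 1) - wSeq α n = hSeq α n :=
  add_sub_cancel_left _ _

end Evaluation

section Equidistance

variable {α : ℝ} (k : ℕ)

theorem uSeq_three_mul_add_two_sub_eq (hk : (k : ℝ) + 2 * α ≠ 0) :
    uSeq α (3 * k + 2) - uSeq α (3 * k + 1) = uSeq α (3 * k + 1) - uSeq α (3 * k) := by
  rw [uSeq_three_mul_add_two, uSeq_three_mul_add_one, uSeq_three_mul]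
  field_simp
  ring

theorem vSeq_three_mul_add_three_sub_eq (hk : (k : ℝ) + 1 + α ≠ 0)
    (hk' : (k : ℝ) + 1 - 2 * α ≠ 0) :
    vSeq α (3 * k + 3) - vSeq α (3 * k + 2) = vSeq α (3 * k + 2) - vSeq α (3 * k + 1) := by
  rw [vSeq_three_mul_add_three, vSeq_three_mul_add_two, vSeq_three_mul_add_one, Pi2_succ]
  grind

theorem wSeq_three_mul_add_four_sub_eq :
    wSeq α (3 * k + 4) - wSeq α (3 * k + 3) = wSeq α (3 * k + 3) - wSeq α (3 * k + 2) := by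
  rw [wSeq_succ_sub, wSeq_succ_sub, hSeq, hSeq, fSeq_three_mul_add_three,
    gSeq_three_mul_add_three]

end Equidistance

/-- The equidistance properties of the axis values of the isomonodromic
solution in the symmetric case `β = α`. -/
theorem axis_equidistance
    (α : ℝ) (hα0 : 0 < α) (hα : α < 1 / 2) :
    ∀ k : ℕ, 1 ≤ k →
      |uSeq α (3 * k - 1) - uSeq α (3 * k - 2)|
        = |uSeq α (3 * k - 2) - uSeq α (3 * k - 3)| ∧
      |vSeq α (3 * k) - vSeq α (3 * k - 1)|
        = |vSeq α (3 * k - 1) - vSeq α (3 * k - 2)| ∧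
      |wSeq α (3 * k + 1) - wSeq α (3 * k)|
        = |wSeq α (3 * k) - wSeq α (3 * k - 1)| := by
  rintro (_ | m) hm
  · omega
  rw [show 3 * (m + 1) - 1 = 3 * m + 2 by omega, show 3 * (m + 1) - 2 = 3 * m + 1 by omega,
    show 3 * (m + 1) - 3 = 3 * m by omega, show 3 * (m + 1) = 3 * m + 3 by omega]
  refine ⟨?_, ?_, ?_⟩
  · rw [uSeq_three_mul_add_two_sub_eq m (by positivity)]
  · rw [vSeq_three_mul_add_three_sub_eq m (by positivity) (by linarith)]
  · rw [wSeq_three_mul_add_four_sub_eq m]
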